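/- Let t ≥ 0, b = 30t+17, a = 30t+19, and suppose 30t+17, 30t+19, 30t+23 are prime but 30t+29 is composite. Then H_a(5) ≥ 30t+31 and H_b(5) = 30t+23, so H_a(5) − H_b(5) ≥ 8, and the least n with H_a(n) − H_b(n) > 6 is n = 5. -/
import Mathlib


/-- The H-sequence with starting value `c`: `Hseq c 2 = c` and for `n ≥ 2`,
`Hseq c (n+1)` is the least `m > Hseq c n` with (`m` prime ↔ `n+1` prime). -/
noncomputable def Hseq (c : ℕ) : ℕ → ℕ
  | 0 => c
  | 1 => c
  | 2 => c
  | n + 3 => sInf {m | Hseq c (n + 2) < m ∧ (Nat.Prime m ↔ Nat.Prime (n + 3))}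

lemma Hseq_two (c : ℕ) : Hseq c 2 = c := rfl

lemma Hseq_succ (c n : ℕ) :
    Hseq c (n + 3) = sInf {m | Hseq c (n + 2) < m ∧ (Nat.Prime m ↔ Nat.Prime (n + 3))} := by
  rw [Hseq]

lemma sInf_eq_of (S : Set ℕ) (m : ℕ) (hm : m ∈ S) (hlb : ∀ k ∈ S, m ≤ k) : sInf S = m :=
  le_antisymm (Nat.sInf_le hm) (le_csInf ⟨m, hm⟩ hlb)

lemma not_prime_of_dvd (d n : ℕ) (hd : 2 ≤ d) (hn : d < n) (h : d ∣ n) : ¬ n.Prime := by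
  intro hp
  rcases hp.eq_one_or_self_of_dvd d h with h1 | h1 <;> omega

theorem stmt6 (t : ℕ) (h17 : Nat.Prime (30*t+17)) (h19 : Nat.Prime (30*t+19))
    (h23 : Nat.Prime (30*t+23)) (h29 : ¬ Nat.Prime (30*t+29)) :
    30*t+31 ≤ Hseq (30*t+19) 5 ∧ Hseq (30*t+17) 5 = 30*t+23 ∧
      8 ≤ Hseq (30*t+19) 5 - Hseq (30*t+17) 5 ∧
      IsLeast {n | 2 ≤ n ∧ 6 < Hseq (30*t+19) n - Hseq (30*t+17) n} 5 := by
  have np18 : ¬ Nat.Prime (30*t+18) := not_prime_of_dvd 2 _ (by norm_num) (by omega) ⟨15*t+9, by ring⟩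
  have np20 : ¬ Nat.Prime (30*t+20) := not_prime_of_dvd 2 _ (by norm_num) (by omega) ⟨15*t+10, by ring⟩
  have np21 : ¬ Nat.Prime (30*t+21) := not_prime_of_dvd 3 _ (by norm_num) (by omega) ⟨10*t+7, by ring⟩
  have np22 : ¬ Nat.Prime (30*t+22) := not_prime_of_dvd 2 _ (by norm_num) (by omega) ⟨15*t+11, by ring⟩
  have np24 : ¬ Nat.Prime (30*t+24) := not_prime_of_dvd 2 _ (by norm_num) (by omega) ⟨15*t+12, by ring⟩
  have np25 : ¬ Nat.Prime (30*t+25) := not_prime_of_dvd 5 _ (by norm_num) (by omega) ⟨6*t+5, by ring⟩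
  have np26 : ¬ Nat.Prime (30*t+26) := not_prime_of_dvd 2 _ (by norm_num) (by omega) ⟨15*t+13, by ring⟩
  have np27 : ¬ Nat.Prime (30*t+27) := not_prime_of_dvd 3 _ (by norm_num) (by omega) ⟨10*t+9, by ring⟩
  have np28 : ¬ Nat.Prime (30*t+28) := not_prime_of_dvd 2 _ (by norm_num) (by omega) ⟨15*t+14, by ring⟩
  have np30 : ¬ Nat.Prime (30*t+30) := not_prime_of_dvd 2 _ (by norm_num) (by omega) ⟨15*t+15, by ring⟩
  have p3 : Nat.Prime (0+3) := by norm_num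
  have np4 : ¬ Nat.Prime (1+3) := by norm_num
  have p5 : Nat.Prime (2+3) := by norm_num
  -- b = 30t+17 branch
  have hb3 : Hseq (30*t+17) 3 = 30*t+19 := by
    rw [show (3:ℕ) = 0 + 3 from rfl, Hseq_succ, show (0:ℕ)+2 = 2 from rfl, Hseq_two]
    refine sInf_eq_of _ _ ⟨by omega, iff_of_true h19 p3⟩ ?_
    rintro k ⟨hk1, hk2⟩
    have hkp := hk2.mpr p3
    by_contra h
    have : k = 30*t+18 := by omega
    exact np18 (this ▸ hkp)
  have hb4 : Hseq (30*t+17) 4 = 30*t+20 := by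
    rw [show (4:ℕ) = 1 + 3 from rfl, Hseq_succ, show (1:ℕ)+2 = 3 from rfl, hb3]
    refine sInf_eq_of _ _ ⟨by omega, iff_of_false np20 np4⟩ ?_
    rintro k ⟨hk1, _⟩; omega
  have hb5 : Hseq (30*t+17) 5 = 30*t+23 := by
    rw [show (5:ℕ) = 2 + 3 from rfl, Hseq_succ, show (2:ℕ)+2 = 4 from rfl, hb4]
    refine sInf_eq_of _ _ ⟨by omega, iff_of_true h23 p5⟩ ?_
    rintro k ⟨hk1, hk2⟩
    have hkp := hk2.mpr p5
    by_contra h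
    have : k = 30*t+21 ∨ k = 30*t+22 := by omega
    rcases this with h' | h' <;> [exact np21 (h' ▸ hkp); exact np22 (h' ▸ hkp)]
  -- a = 30t+19 branch
  have ha3 : Hseq (30*t+19) 3 = 30*t+23 := by
    rw [show (3:ℕ) = 0 + 3 from rfl, Hseq_succ, show (0:ℕ)+2 = 2 from rfl, Hseq_two]
    refine sInf_eq_of _ _ ⟨by omega, iff_of_true h23 p3⟩ ?_
    rintro k ⟨hk1, hk2⟩
    have hkp := hk2.mpr p3
    by_contra h
    have : k = 30*t+20 ∨ k = 30*t+21 ∨ k = 30*t+22 := by omega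
    rcases this with h' | h' | h' <;>
      [exact np20 (h' ▸ hkp); exact np21 (h' ▸ hkp); exact np22 (h' ▸ hkp)]
  have ha4 : Hseq (30*t+19) 4 = 30*t+24 := by
    rw [show (4:ℕ) = 1 + 3 from rfl, Hseq_succ, show (1:ℕ)+2 = 3 from rfl, ha3]
    refine sInf_eq_of _ _ ⟨by omega, iff_of_false np24 np4⟩ ?_
    rintro k ⟨hk1, _⟩; omega
  have ha5 : 30*t+31 ≤ Hseq (30*t+19) 5 := by
    rw [show (5:ℕ) = 2 + 3 from rfl, Hseq_succ, show (2:ℕ)+2 = 4 from rfl, ha4]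
    obtain ⟨p, hp1, hp2⟩ := Nat.exists_infinite_primes (30*t+25)
    have hne : {m | 30*t+24 < m ∧ (Nat.Prime m ↔ Nat.Prime (2+3))}.Nonempty :=
      ⟨p, by omega, iff_of_true hp2 p5⟩
    obtain ⟨hm1, hm2⟩ := Nat.sInf_mem hne
    have hmp := hm2.mpr p5
    set m := sInf {m | 30*t+24 < m ∧ (Nat.Prime m ↔ Nat.Prime (2+3))} with hm
    by_contra h
    have hlt : 30*t+24 < m := hm1
    have : m = 30*t+25 ∨ m = 30*t+26 ∨ m = 30*t+27 ∨ m = 30*t+28 ∨ m = 30*t+29 ∨ m = 30*t+30 := by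
      omega
    rcases this with h' | h' | h' | h' | h' | h' <;>
      first
        | exact np25 (h' ▸ hmp) | exact np26 (h' ▸ hmp) | exact np27 (h' ▸ hmp)
        | exact np28 (h' ▸ hmp) | exact h29 (h' ▸ hmp) | exact np30 (h' ▸ hmp)
  refine ⟨ha5, hb5, by omega, ⟨⟨by norm_num, by rw [hb5]; omega⟩, ?_⟩⟩
  rintro n ⟨hn2, hn6⟩
  by_contra h
  have : n = 2 ∨ n = 3 ∨ n = 4 := by omega
  rcases this with h' | h' | h' <;> subst h'
  · rw [Hseq_two, Hseq_two] at hn6; omega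
  · rw [ha3, hb3] at hn6; omega
  · rw [ha4, hb4] at hn6; omega
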